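/- Let X be a set, let F, U^0,…,U^n, A^0,…,A^n : X → ℝ^{p×p} and G, V^0,…,V^n, B^0,…,B^n : X → ℝ^{q×q} take symmetric matrix values, and suppose that for every x ∈ X: U^0(x) ⪯ U^1(x) ⪯ … ⪯ U^n(x) = F(x); V^0(x) ⪯ V^1(x) ⪯ … ⪯ V^n(x) = G(x); U^0(x) = A^0(x) ⪯ A^1(x) ⪯ … ⪯ A^n(x); V^0(x) = B^0(x) ⪯ B^1(x) ⪯ … ⪯ B^n(x); and U^i(x) ⪯ A^i(x) and V^i(x) ⪯ B^i(x) for every i ∈ {0,…,n}. Then for every x ∈ X and every direction vector ω, F(x) ⊗ G(x) ⪯ A^0(x) ⊗ B^0(x) + Σ_{t:ω_t=1} (U^{p^t_1}(x) − U^{p^{t−1}_1}(x)) ⊗ B^{p^t_2}(x) + Σ_{t:ω_t=2} A^{p^t_1}(x) ⊗ (V^{p^t_2}(x) − V^{p^{t−1}_2}(x)). -/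

import Mathlib

open Finset Kronecker

noncomputable section

/-- A direction vector (d = 2): each of the two values occurs exactly `n` times. -/
def IsDirVec (d n : ℕ) (ω : Fin (d * n) → Fin d) : Prop :=
  ∀ i : Fin d, (Finset.univ.filter (fun t => ω t = i)).card = n

/-- The grid point reached after the first `t` moves of the staircase determined by `ω`. -/
def gridPt (d n : ℕ) (ω : Fin (d * n) → Fin d) (t : ℕ) (i : Fin d) : ℕ :=
  (Finset.univ.filter (fun t' : Fin (d * n) => (t' : ℕ) < t ∧ ω t' = i)).card

/-- Loewner order: `A ⪯ B` iff `B - A` is positive semidefinite. -/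
def LoewnerLE {ι : Type*} [Fintype ι] (A B : Matrix ι ι ℝ) : Prop :=
  (B - A).PosSemidef

/- ### Auxiliary lemmas -/

lemma aux_sub_kronecker {p q : ℕ} (A B : Matrix (Fin p) (Fin p) ℝ)
    (C : Matrix (Fin q) (Fin q) ℝ) : (A - B) ⊗ₖ C = A ⊗ₖ C - B ⊗ₖ C := by
  ext ⟨i, k⟩ ⟨j, l⟩
  simp [Matrix.kroneckerMap_apply, sub_mul]

lemma aux_kronecker_sub {p q : ℕ} (A : Matrix (Fin p) (Fin p) ℝ)
    (B C : Matrix (Fin q) (Fin q) ℝ) : A ⊗ₖ (B - C) = A ⊗ₖ B - A ⊗ₖ C := by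
  ext ⟨i, k⟩ ⟨j, l⟩
  simp [Matrix.kroneckerMap_apply, mul_sub]

lemma aux_psd_kronecker {p q : ℕ} {A : Matrix (Fin p) (Fin p) ℝ}
    {B : Matrix (Fin q) (Fin q) ℝ} (hA : A.PosSemidef) (hB : B.PosSemidef) :
    (A ⊗ₖ B).PosSemidef := by
  open scoped MatrixOrder in
  obtain ⟨C, rfl⟩ := CStarAlgebra.nonneg_iff_eq_star_mul_self.mp hA.nonneg
  open scoped MatrixOrder in
  obtain ⟨D, rfl⟩ := CStarAlgebra.nonneg_iff_eq_star_mul_self.mp hB.nonneg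
  simp only [Matrix.star_eq_conjTranspose]
  rw [Matrix.mul_kronecker_mul]
  have h : C.conjTranspose ⊗ₖ D.conjTranspose = (C ⊗ₖ D).conjTranspose := by
    ext ⟨i, k⟩ ⟨j, l⟩
    simp [Matrix.kroneckerMap_apply, Matrix.conjTranspose_apply]
  rw [h]
  exact Matrix.posSemidef_conjTranspose_mul_self _

lemma gridPt_zero (d n : ℕ) (ω : Fin (d * n) → Fin d) (i : Fin d) :
    gridPt d n ω 0 i = 0 := by
  simp [gridPt]

lemma gridPt_mono (d n : ℕ) (ω : Fin (d * n) → Fin d) (i : Fin d) {s t : ℕ}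
    (h : s ≤ t) : gridPt d n ω s i ≤ gridPt d n ω t i := by
  apply Finset.card_le_card
  apply Finset.monotone_filter_right
  rintro t' _ ⟨h1, h2⟩
  exact ⟨h1.trans_le h, h2⟩

lemma gridPt_top {d n : ℕ} (ω : Fin (d * n) → Fin d) (hω : IsDirVec d n ω)
    (i : Fin d) : gridPt d n ω (d * n) i = n := by
  have h : gridPt d n ω (d * n) i
      = (Finset.univ.filter (fun t' : Fin (d * n) => ω t' = i)).card := by
    unfold gridPt
    congr 1
    apply Finset.filter_congr
    intro t' _
    simp [t'.isLt]
  rw [h, hω i]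

lemma gridPt_le {d n : ℕ} (ω : Fin (d * n) → Fin d) (hω : IsDirVec d n ω)
    (i : Fin d) {t : ℕ} (ht : t ≤ d * n) : gridPt d n ω t i ≤ n := by
  exact (gridPt_mono d n ω i ht).trans (le_of_eq (gridPt_top ω hω i))

lemma gridPt_succ {d n : ℕ} (ω : Fin (d * n) → Fin d) (t : Fin (d * n)) (i : Fin d) :
    gridPt d n ω ((t : ℕ) + 1) i = gridPt d n ω (t : ℕ) i + if ω t = i then 1 else 0 := by
  classical
  unfold gridPt
  have key : Finset.univ.filter (fun t' : Fin (d * n) => (t' : ℕ) < (t : ℕ) + 1 ∧ ω t' = i)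
      = Finset.univ.filter (fun t' : Fin (d * n) => (t' : ℕ) < (t : ℕ) ∧ ω t' = i)
        ∪ Finset.univ.filter (fun t' : Fin (d * n) => t' = t ∧ ω t' = i) := by
    rw [← Finset.filter_or]
    apply Finset.filter_congr
    intro t' _
    constructor
    · rintro ⟨h1, h2⟩
      rcases Nat.lt_succ_iff_lt_or_eq.mp h1 with h | h
      · exact Or.inl ⟨h, h2⟩
      · exact Or.inr ⟨Fin.ext h, h2⟩
    · rintro (⟨h1, h2⟩ | ⟨h1, h2⟩)
      · exact ⟨Nat.lt_succ_of_lt h1, h2⟩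
      · exact ⟨by simp [h1], h2⟩
  rw [key, Finset.card_union_of_disjoint]
  · congr 1
    by_cases h : ω t = i
    · have : Finset.univ.filter (fun t' : Fin (d * n) => t' = t ∧ ω t' = i)
          = Finset.univ.filter (fun t' : Fin (d * n) => t' = t) := by
        apply Finset.filter_congr
        intro t' _
        constructor
        · rintro ⟨h1, _⟩; exact h1
        · rintro h1; exact ⟨h1, h1 ▸ h⟩
      rw [this, Finset.filter_eq', if_pos (Finset.mem_univ t)]
      simp [h]
    · have : Finset.univ.filter (fun t' : Fin (d * n) => t' = t ∧ ω t' = i) = ∅ := by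
        apply Finset.filter_false_of_mem
        rintro t' _ ⟨h1, h2⟩
        exact h (h1 ▸ h2)
      simp [this, h]
  · rw [Finset.disjoint_left]
    rintro t' ht' ht''
    rw [Finset.mem_filter] at ht' ht''
    obtain ⟨-, h1, -⟩ := ht'
    obtain ⟨-, rfl, -⟩ := ht''
    exact absurd h1 (lt_irrefl _)


theorem statement_10
    (n : ℕ) (hn : 1 ≤ n) (α : Type*) (X : Set α) (p q : ℕ)
    (F : α → Matrix (Fin p) (Fin p) ℝ) (G : α → Matrix (Fin q) (Fin q) ℝ)
    (U A : α → ℕ → Matrix (Fin p) (Fin p) ℝ)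
    (V B : α → ℕ → Matrix (Fin q) (Fin q) ℝ)
    (hsymF : ∀ x ∈ X, (F x).IsSymm) (hsymG : ∀ x ∈ X, (G x).IsSymm)
    (hsymU : ∀ x ∈ X, ∀ i, i ≤ n → (U x i).IsSymm)
    (hsymA : ∀ x ∈ X, ∀ i, i ≤ n → (A x i).IsSymm)
    (hsymV : ∀ x ∈ X, ∀ i, i ≤ n → (V x i).IsSymm)
    (hsymB : ∀ x ∈ X, ∀ i, i ≤ n → (B x i).IsSymm)
    (hUchain : ∀ x ∈ X, ∀ i, i < n → LoewnerLE (U x i) (U x (i + 1)))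
    (hUn : ∀ x ∈ X, U x n = F x)
    (hVchain : ∀ x ∈ X, ∀ i, i < n → LoewnerLE (V x i) (V x (i + 1)))
    (hVn : ∀ x ∈ X, V x n = G x)
    (hU0 : ∀ x ∈ X, U x 0 = A x 0)
    (hAchain : ∀ x ∈ X, ∀ i, i < n → LoewnerLE (A x i) (A x (i + 1)))
    (hV0 : ∀ x ∈ X, V x 0 = B x 0)
    (hBchain : ∀ x ∈ X, ∀ i, i < n → LoewnerLE (B x i) (B x (i + 1)))
    (hUA : ∀ x ∈ X, ∀ i, i ≤ n → LoewnerLE (U x i) (A x i))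
    (hVB : ∀ x ∈ X, ∀ i, i ≤ n → LoewnerLE (V x i) (B x i))
    (x : α) (hx : x ∈ X) (ω : Fin (2 * n) → Fin 2) (hω : IsDirVec 2 n ω) :
    LoewnerLE (F x ⊗ₖ G x)
      (A x 0 ⊗ₖ B x 0 +
        (∑ t ∈ Finset.univ.filter (fun t : Fin (2 * n) => ω t = 0),
          (U x (gridPt 2 n ω ((t : ℕ) + 1) 0) - U x (gridPt 2 n ω (t : ℕ) 0)) ⊗ₖ
            B x (gridPt 2 n ω ((t : ℕ) + 1) 1)) +
        ∑ t ∈ Finset.univ.filter (fun t : Fin (2 * n) => ω t = 1),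
          A x (gridPt 2 n ω ((t : ℕ) + 1) 0) ⊗ₖ
            (V x (gridPt 2 n ω ((t : ℕ) + 1) 1) - V x (gridPt 2 n ω (t : ℕ) 1))) := by
  classical
  have ht2 : ∀ t : Fin (2 * n), (t : ℕ) + 1 ≤ 2 * n := fun t => t.isLt
  have hfin2 : ∀ a : Fin 2, ¬a = 0 ↔ a = 1 := by decide
  have htel : (∑ t : Fin (2 * n),
      (U x (gridPt 2 n ω ((t : ℕ) + 1) 0) ⊗ₖ V x (gridPt 2 n ω ((t : ℕ) + 1) 1)
        - U x (gridPt 2 n ω (t : ℕ) 0) ⊗ₖ V x (gridPt 2 n ω (t : ℕ) 1)))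
      = F x ⊗ₖ G x - A x 0 ⊗ₖ B x 0 := by
    rw [Fin.sum_univ_eq_sum_range (fun k =>
      U x (gridPt 2 n ω (k + 1) 0) ⊗ₖ V x (gridPt 2 n ω (k + 1) 1)
        - U x (gridPt 2 n ω k 0) ⊗ₖ V x (gridPt 2 n ω k 1)) (2 * n)]
    rw [Finset.sum_range_sub (fun k => U x (gridPt 2 n ω k 0) ⊗ₖ V x (gridPt 2 n ω k 1))]
    rw [gridPt_top ω hω 0, gridPt_top ω hω 1, gridPt_zero, gridPt_zero,
      hUn x hx, hVn x hx, hU0 x hx, hV0 x hx]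
  have key : (A x 0 ⊗ₖ B x 0 +
        (∑ t ∈ Finset.univ.filter (fun t : Fin (2 * n) => ω t = 0),
          (U x (gridPt 2 n ω ((t : ℕ) + 1) 0) - U x (gridPt 2 n ω (t : ℕ) 0)) ⊗ₖ
            B x (gridPt 2 n ω ((t : ℕ) + 1) 1)) +
        ∑ t ∈ Finset.univ.filter (fun t : Fin (2 * n) => ω t = 1),
          A x (gridPt 2 n ω ((t : ℕ) + 1) 0) ⊗ₖ
            (V x (gridPt 2 n ω ((t : ℕ) + 1) 1) - V x (gridPt 2 n ω (t : ℕ) 1)))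
        - F x ⊗ₖ G x
      = ∑ t : Fin (2 * n), (if ω t = 0 then
          (U x (gridPt 2 n ω ((t : ℕ) + 1) 0) - U x (gridPt 2 n ω (t : ℕ) 0)) ⊗ₖ
            (B x (gridPt 2 n ω ((t : ℕ) + 1) 1) - V x (gridPt 2 n ω ((t : ℕ) + 1) 1))
        else
          (A x (gridPt 2 n ω ((t : ℕ) + 1) 0) - U x (gridPt 2 n ω ((t : ℕ) + 1) 0)) ⊗ₖ
            (V x (gridPt 2 n ω ((t : ℕ) + 1) 1) - V x (gridPt 2 n ω (t : ℕ) 1))) := by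
    have hpt : ∀ t : Fin (2 * n), (if ω t = 0 then
          (U x (gridPt 2 n ω ((t : ℕ) + 1) 0) - U x (gridPt 2 n ω (t : ℕ) 0)) ⊗ₖ
            (B x (gridPt 2 n ω ((t : ℕ) + 1) 1) - V x (gridPt 2 n ω ((t : ℕ) + 1) 1))
        else
          (A x (gridPt 2 n ω ((t : ℕ) + 1) 0) - U x (gridPt 2 n ω ((t : ℕ) + 1) 0)) ⊗ₖ
            (V x (gridPt 2 n ω ((t : ℕ) + 1) 1) - V x (gridPt 2 n ω (t : ℕ) 1)))
        = (if ω t = 0 then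
            (U x (gridPt 2 n ω ((t : ℕ) + 1) 0) - U x (gridPt 2 n ω (t : ℕ) 0)) ⊗ₖ
              B x (gridPt 2 n ω ((t : ℕ) + 1) 1)
          else
            A x (gridPt 2 n ω ((t : ℕ) + 1) 0) ⊗ₖ
              (V x (gridPt 2 n ω ((t : ℕ) + 1) 1) - V x (gridPt 2 n ω (t : ℕ) 1)))
          - (U x (gridPt 2 n ω ((t : ℕ) + 1) 0) ⊗ₖ V x (gridPt 2 n ω ((t : ℕ) + 1) 1)
            - U x (gridPt 2 n ω (t : ℕ) 0) ⊗ₖ V x (gridPt 2 n ω (t : ℕ) 1)) := by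
      intro t
      by_cases h : ω t = 0
      · have eb : gridPt 2 n ω ((t : ℕ) + 1) 1 = gridPt 2 n ω (t : ℕ) 1 := by
          rw [gridPt_succ]; simp [h]
        rw [if_pos h, if_pos h, eb]
        simp only [aux_sub_kronecker, aux_kronecker_sub]
        try abel
      · have ea : gridPt 2 n ω ((t : ℕ) + 1) 0 = gridPt 2 n ω (t : ℕ) 0 := by
          rw [gridPt_succ]; simp [h]
        rw [if_neg h, if_neg h, ea]
        simp only [aux_sub_kronecker, aux_kronecker_sub]
        try abel
    have e1 : (∑ t : Fin (2 * n), (if ω t = 0 then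
          (U x (gridPt 2 n ω ((t : ℕ) + 1) 0) - U x (gridPt 2 n ω (t : ℕ) 0)) ⊗ₖ
            (B x (gridPt 2 n ω ((t : ℕ) + 1) 1) - V x (gridPt 2 n ω ((t : ℕ) + 1) 1))
        else
          (A x (gridPt 2 n ω ((t : ℕ) + 1) 0) - U x (gridPt 2 n ω ((t : ℕ) + 1) 0)) ⊗ₖ
            (V x (gridPt 2 n ω ((t : ℕ) + 1) 1) - V x (gridPt 2 n ω (t : ℕ) 1))))
        = (∑ t : Fin (2 * n), (if ω t = 0 then
            (U x (gridPt 2 n ω ((t : ℕ) + 1) 0) - U x (gridPt 2 n ω (t : ℕ) 0)) ⊗ₖ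
              B x (gridPt 2 n ω ((t : ℕ) + 1) 1)
          else
            A x (gridPt 2 n ω ((t : ℕ) + 1) 0) ⊗ₖ
              (V x (gridPt 2 n ω ((t : ℕ) + 1) 1) - V x (gridPt 2 n ω (t : ℕ) 1))))
          - ∑ t : Fin (2 * n),
            (U x (gridPt 2 n ω ((t : ℕ) + 1) 0) ⊗ₖ V x (gridPt 2 n ω ((t : ℕ) + 1) 1)
              - U x (gridPt 2 n ω (t : ℕ) 0) ⊗ₖ V x (gridPt 2 n ω (t : ℕ) 1)) := by
      rw [← Finset.sum_sub_distrib]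
      exact Finset.sum_congr rfl fun t _ => hpt t
    rw [e1, htel, Finset.sum_ite]
    have hfneg : (Finset.univ.filter (fun t : Fin (2 * n) => ¬ω t = 0))
        = Finset.univ.filter (fun t : Fin (2 * n) => ω t = 1) := by
      apply Finset.filter_congr
      intro t _
      exact hfin2 (ω t)
    rw [hfneg]
    abel
  unfold LoewnerLE
  rw [key]
  refine Finset.sum_induction _ (fun C => Matrix.PosSemidef C)
    (fun a b ha hb => ha.add hb) Matrix.PosSemidef.zero ?_
  intro t _
  have ht := t.isLt
  by_cases h : ω t = 0
  · have ea : gridPt 2 n ω ((t : ℕ) + 1) 0 = gridPt 2 n ω (t : ℕ) 0 + 1 := by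
      rw [gridPt_succ]; simp [h]
    have hle : gridPt 2 n ω ((t : ℕ) + 1) 0 ≤ n := gridPt_le ω hω 0 (by omega)
    rw [if_pos h]
    apply aux_psd_kronecker
    · rw [ea]
      exact hUchain x hx _ (by omega)
    · exact hVB x hx _ (gridPt_le ω hω 1 (by omega))
  · have h1 : ω t = 1 := (hfin2 (ω t)).mp h
    have eb : gridPt 2 n ω ((t : ℕ) + 1) 1 = gridPt 2 n ω (t : ℕ) 1 + 1 := by
      rw [gridPt_succ]; simp [h1]
    have hle : gridPt 2 n ω ((t : ℕ) + 1) 1 ≤ n := gridPt_le ω hω 1 (by omega)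
    rw [if_neg h]
    apply aux_psd_kronecker
    · exact hUA x hx _ (gridPt_le ω hω 0 (by omega))
    · rw [eb]
      exact hVchain x hx _ (by omega)
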